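/- arXiv:0910.0535 — 2 statements merged into one kernel-verified Lean document; each statement's English description precedes it below -/
import Mathlib

section
/- Let S and T be monoids with zeros, λ₂ ≥ λ₁ ≥ 1 cardinals, and σ : B⁰_{λ₁}(S) → B⁰_{λ₂}(T) a non-trivial homomorphism. Suppose T does not contain the semigroup of 2×2-matrix units (T has the B*-property). If for some α, β ∈ I_{λ₁} and s ∈ S the image σ(α,s,β) is a non-zero element of B⁰_{λ₂}(T), then σ(α₁,s,β₁) is non-zero for all α₁, β₁ ∈ I_{λ₁}. -/
/-!
In the Brandt extension `(α, s, β) = (α, 1, α₁) · (α₁, s, β₁) · (β₁, 1, β)`, so the image of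
`(α, s, β)` under a multiplicative map is a two-sided multiple of the image of `(α₁, s, β₁)`;
as `0` is absorbing in `B⁰_{λ₂}(T)`, the first image vanishes as soon as the second does.
-/

attribute [local instance] Classical.propDecidable

/-- The Brandt `λ⁰`-extension of a semigroup `S` with zero, with index set `I`:
its elements are `0` (encoded `none`) and triples `(α, s, β)` with `s ≠ 0`. -/
def Brandt (I S : Type*) [Zero S] : Type _ := Option (I × {s : S // s ≠ 0} × I)

instance brandtZero {I S : Type*} [Zero S] : Zero (Brandt I S) := ⟨none⟩

/-- Multiplication on the Brandt `λ⁰`-extension. -/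
noncomputable def brandtMul {I S : Type*} [Zero S] [Mul S] :
    Brandt I S → Brandt I S → Brandt I S
  | some (α, a, β), some (γ, b, δ) =>
      if h : β = γ ∧ a.1 * b.1 ≠ 0 then some (α, ⟨a.1 * b.1, h.2⟩, δ) else none
  | _, _ => none

noncomputable instance brandtMulInst {I S : Type*} [Zero S] [Mul S] :
    Mul (Brandt I S) := ⟨brandtMul⟩

/-- The semigroup of `I × I`-matrix units. -/
def MatrixUnits (I : Type*) := Option (I × I)

instance muZero {I : Type*} : Zero (MatrixUnits I) := ⟨none⟩

noncomputable instance muMul {I : Type*} : Mul (MatrixUnits I) :=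
  ⟨fun x y => match x, y with
    | some (a, b), some (c, d) => if b = c then some (a, d) else none
    | _, _ => none⟩

/-- The subset of `Brandt I S` induced by a subset `T ⊆ S`
(the Brandt extension of `T` inside that of `S`). -/
def brandtSet {I S : Type*} [Zero S] (T : Set S) : Set (Brandt I S) :=
  {z | z = 0 ∨ ∃ (α β : I) (s : {s : S // s ≠ 0}), s.1 ∈ T ∧ z = some (α, s, β)}

/-- The map `B⁰_{λ₁}(S) → B⁰_{λ₂}(T)` induced by `h : S → T`, an index map `φ`
and families `u`, `v` (`v` playing the role of `a ↦ u(a)⁻¹`):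
`(α,s,β) ↦ (φ α, u α · h s · v β, φ β)` when the middle entry is nonzero, else `0`. -/
noncomputable def brandtHomMap {I₁ I₂ S T : Type*} [Zero S] [Zero T] [Mul T]
    (φ : I₁ → I₂) (u v : I₁ → T) (h : S → T) : Brandt I₁ S → Brandt I₂ T
  | some (a, s, b) =>
      if hh : u a * h s.1 * v b ≠ 0 then
        some (φ a, ⟨u a * h s.1 * v b, hh⟩, φ b) else none
  | none => none

/-- The canonical copy of `S` in `Brandt I S` at index `α` (the set `S_{α,α}`). -/
noncomputable def brandtIncl {I S : Type*} [Zero S] (α : I) : S → Brandt I S :=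
  fun s => if h : s = 0 then 0 else some (α, ⟨s, h⟩, α)

namespace Brandt

variable {I S : Type*}

/-- `some (α, s, β)` at type `Brandt I S` rather than `Option _`, so that products of such
terms pick up the Brandt multiplication. -/
abbrev mk [Zero S] (α : I) (s : {s : S // s ≠ 0}) (β : I) : Brandt I S :=
  some (α, s, β)

noncomputable instance instMulZeroClass [Zero S] [Mul S] : MulZeroClass (Brandt I S) where
  zero_mul _ := rfl
  mul_zero x := by cases x <;> rfl

theorem mk_mul_mk [Zero S] [Mul S] (α β γ : I) (a b : {s : S // s ≠ 0}) (hab : a.1 * b.1 ≠ 0) :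
    mk α a β * mk β b γ = mk α ⟨a.1 * b.1, hab⟩ γ :=
  dif_pos ⟨rfl, hab⟩

theorem mk_eq_one_mul_mul_one [MulZeroOneClass S] [NeZero (1 : S)] {α β : I} (α₁ β₁ : I)
    (s : {s : S // s ≠ 0}) :
    mk α s β = mk α ⟨1, one_ne_zero⟩ α₁ * mk α₁ s β₁ * mk β₁ ⟨1, one_ne_zero⟩ β := by
  rw [mk_mul_mk _ _ _ _ _ (by simpa using s.2), mk_mul_mk _ _ _ _ _ (by simpa using s.2)]
  simp only [one_mul, mul_one]

end Brandt

theorem brandt_hom_nonzero_everywhere_general {I J S T : Type*}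
    [MonoidWithZero S] [MonoidWithZero T]
    (σ : Brandt I S → Brandt J T) (hmul : ∀ x y, σ (x * y) = σ x * σ y)
    (α β : I) (s : {s : S // s ≠ 0})
    (hnz : σ (some (α, s, β)) ≠ 0) :
    ∀ α₁ β₁ : I, σ (some (α₁, s, β₁)) ≠ 0 := by
  have : Nontrivial S := nontrivial_of_ne s.1 0 s.2
  intro α₁ β₁ hzero
  apply hnz
  change σ (Brandt.mk α s β) = 0
  rw [Brandt.mk_eq_one_mul_mul_one α₁ β₁, hmul, hmul, hzero, mul_zero, zero_mul]

/-- If `T` has the `B*`-property (contains no copy of the `2 × 2`-matrix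
units), `σ : B⁰_{λ₁}(S) → B⁰_{λ₂}(T)` is a non-trivial homomorphism and
`σ(α,s,β) ≠ 0` for some `α, β`, then `σ(α₁,s,β₁) ≠ 0` for all `α₁, β₁`. -/
theorem brandt_hom_nonzero_everywhere {I J S T : Type*}
    [MonoidWithZero S] [MonoidWithZero T] [Nonempty I] (ι : I ↪ J)
    (σ : Brandt I S → Brandt J T) (hmul : ∀ x y, σ (x * y) = σ x * σ y)
    (hnt : ∃ x y, σ x ≠ σ y)
    (hBstar : ¬∃ f : MatrixUnits (Fin 2) → T,
        Function.Injective f ∧ ∀ x y, f (x * y) = f x * f y)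
    (α β : I) (s : {s : S // s ≠ 0})
    (hnz : σ (some (α, s, β)) ≠ 0) :
    ∀ α₁ β₁ : I, σ (some (α₁, s, β₁)) ≠ 0 :=
  brandt_hom_nonzero_everywhere_general σ hmul α β s hnz
end

section
/- A topological Brandt λ⁰-extension B⁰_λ(S) of a topological monoid (S,τ) with zero is compact if and only if the cardinal λ ≥ 1 is finite and (S,τ) is compact. -/
attribute [local instance] Classical.propDecidable

/-- The non-zero element `(α, s, β)` of `Brandt I S`. -/
def brandtElt {I S : Type*} [Zero S] (α : I) (s : {s : S // s ≠ 0}) (β : I) :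
    Brandt I S := some (α, s, β)

/-!
In a compact Hausdorff topological semigroup, families `gᵢ`, `fᵢ` with `gᵢ fᵢ = e` and
`gᵢ fⱼ = z ≠ e` for `i ≠ j` are finite: along a non-principal ultrafilter both families
converge, and the product of the limits is the limit of `gᵢ fⱼ` both on the diagonal and
frequently off it. For the matrix units `e_{αi}`, `e_{iα}` of `B⁰_λ(S)` this bounds `λ`.
The corner `e_{αα} B⁰_λ(S) e_{αα}` is the copy `S_{α,α}` of `S`, a continuous image of
`B⁰_λ(S)`; conversely `B⁰_λ(S)` is the union of the `λ²` compact sets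
`e_{βα} S_{α,α} e_{αγ}`.
-/

open Filter Topology

theorem finite_of_mul_diag_ne_offDiag {M ι : Type*} [TopologicalSpace M] [Mul M]
    [ContinuousMul M] [T2Space M] [CompactSpace M] {e z : M} (hez : e ≠ z)
    (g f : ι → M) (hdiag : ∀ i, g i * f i = e) (hoff : ∀ i j, i ≠ j → g i * f j = z) :
    Finite ι := by
  by_contra hfin
  have : Infinite ι := not_finite_iff_infinite.mp hfin
  set 𝒰 : Ultrafilter ι := hyperfilter ι
  have hg : Tendsto g 𝒰 (𝓝 (𝒰.map g).lim) := (𝒰.map g).le_nhds_lim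
  have hf : Tendsto f 𝒰 (𝓝 (𝒰.map f).lim) := (𝒰.map f).le_nhds_lim
  have hlim_diag : (𝒰.map g).lim * (𝒰.map f).lim = e :=
    tendsto_nhds_unique ((hg.mul hf).congr hdiag) tendsto_const_nhds
  have hoffDiag : ∃ᶠ p in (𝒰 : Filter ι) ×ˢ 𝒰, p.1 ≠ p.2 :=
    Frequently.uncurry <| Eventually.frequently <| Eventually.of_forall fun i =>
      Eventually.frequently <|
        hyperfilter_le_cofinite ((eventually_cofinite_ne i).mono fun _ => Ne.symm)
  have hlim_offDiag : (𝒰.map g).lim * (𝒰.map f).lim = z :=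
    tendsto_nhds_unique_of_frequently_eq ((hg.comp tendsto_fst).mul (hf.comp tendsto_snd))
      tendsto_const_nhds (hoffDiag.mono fun p hp => hoff p.1 p.2 hp)
  exact hez (hlim_diag.symm.trans hlim_offDiag)

namespace Brandt

variable {I S : Type*} [MonoidWithZero S]

protected lemma zero_mul (z : Brandt I S) : (0 : Brandt I S) * z = 0 := by
  cases z <;> rfl

protected lemma mul_zero (z : Brandt I S) : z * (0 : Brandt I S) = 0 := by
  cases z <;> rfl

lemma elt_ne_zero (α : I) (s : {s : S // s ≠ 0}) (β : I) : brandtElt α s β ≠ 0 :=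
  Option.some_ne_none _

lemma elt_mul_elt (α : I) (s : {s : S // s ≠ 0}) (β γ : I) (t : {s : S // s ≠ 0}) (δ : I) :
    brandtElt α s β * brandtElt γ t δ =
      if h : β = γ ∧ s.1 * t.1 ≠ 0 then brandtElt α ⟨s.1 * t.1, h.2⟩ δ else 0 :=
  rfl

lemma incl_zero (α : I) : brandtIncl α (0 : S) = 0 := dif_pos rfl

lemma incl_of_ne_zero (α : I) (s : {s : S // s ≠ 0}) : brandtIncl α s.1 = brandtElt α s α :=
  dif_neg s.2

variable [Nontrivial S]

/-- The matrix unit `e_{αβ} = (α, 1, β)`. -/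
def unit (α β : I) : Brandt I S := brandtElt α ⟨1, one_ne_zero⟩ β

lemma unit_mul_elt (α β γ : I) (s : {s : S // s ≠ 0}) (δ : I) :
    unit α β * brandtElt γ s δ = if β = γ then brandtElt α s δ else 0 := by
  by_cases h : β = γ <;> simp [unit, elt_mul_elt, h, s.2]

lemma elt_mul_unit (α : I) (s : {s : S // s ≠ 0}) (β γ δ : I) :
    brandtElt α s β * unit γ δ = if β = γ then brandtElt α s δ else 0 := by
  by_cases h : β = γ <;> simp [unit, elt_mul_elt, h, s.2]

lemma unit_mul_unit_self (α β γ : I) : unit α β * unit β γ = (unit α γ : Brandt I S) :=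
  (unit_mul_elt α β β _ γ).trans (if_pos rfl)

lemma unit_mul_unit_of_ne {α β γ δ : I} (h : β ≠ γ) :
    unit α β * unit γ δ = (0 : Brandt I S) :=
  (unit_mul_elt α β γ _ δ).trans (if_neg h)

lemma unit_mul_elt_mul_unit (α β γ : I) (s : {s : S // s ≠ 0}) :
    unit β α * brandtElt α s α * unit α γ = brandtElt β s γ := by
  rw [unit_mul_elt, if_pos rfl, elt_mul_unit, if_pos rfl]

lemma unit_mul_mul_unit_mem_range_incl (α : I) (z : Brandt I S) :
    unit α α * z * unit α α ∈ Set.range (brandtIncl (S := S) α) := by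
  rcases z with _ | ⟨β, s, γ⟩
  · refine ⟨0, ?_⟩
    show brandtIncl α 0 = unit α α * 0 * unit α α
    rw [incl_zero, Brandt.mul_zero, Brandt.zero_mul]
  · show unit α α * brandtElt β s γ * unit α α ∈ _
    rw [unit_mul_elt]
    split_ifs
    · rw [elt_mul_unit]
      split_ifs
      · exact ⟨s.1, incl_of_ne_zero α s⟩
      · exact ⟨0, incl_zero α⟩
    · exact ⟨0, by rw [Brandt.zero_mul, incl_zero]⟩

lemma range_unit_mul_mul_unit (α : I) :
    Set.range (fun z : Brandt I S => unit α α * z * unit α α) = Set.range (brandtIncl α) := by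
  refine (Set.range_subset_iff.2 (unit_mul_mul_unit_mem_range_incl α)).antisymm ?_
  rintro _ ⟨s, rfl⟩
  by_cases hs : s = 0
  · refine ⟨0, ?_⟩
    show unit α α * 0 * unit α α = brandtIncl α s
    rw [Brandt.mul_zero, Brandt.zero_mul, hs, incl_zero]
  · refine ⟨brandtIncl α s, ?_⟩
    simp only [incl_of_ne_zero α ⟨s, hs⟩, unit_mul_elt_mul_unit]

lemma iUnion_unit_mul_range_incl_mul_unit (α : I) :
    ⋃ p : I × I, (fun z : Brandt I S => unit p.1 α * z * unit α p.2) ''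
      Set.range (brandtIncl α) = Set.univ := by
  refine Set.eq_univ_of_forall fun z => Set.mem_iUnion.2 ?_
  rcases z with _ | ⟨β, s, γ⟩
  · refine ⟨(α, α), 0, ⟨0, incl_zero α⟩, ?_⟩
    show unit α α * 0 * unit α α = 0
    rw [Brandt.mul_zero, Brandt.zero_mul]
  · refine ⟨(β, γ), _, ⟨s.1, rfl⟩, ?_⟩
    rw [incl_of_ne_zero α s]
    exact unit_mul_elt_mul_unit α β γ s

variable [TopologicalSpace (Brandt I S)] [ContinuousMul (Brandt I S)]

lemma finite_of_compactSpace [T2Space (Brandt I S)] [CompactSpace (Brandt I S)] : Finite I := by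
  rcases isEmpty_or_nonempty I with _ | ⟨⟨α⟩⟩
  · infer_instance
  exact finite_of_mul_diag_ne_offDiag (elt_ne_zero α _ α) (fun i => unit (S := S) α i)
    (fun i => unit i α) (fun i => unit_mul_unit_self α i α) fun _ _ h => unit_mul_unit_of_ne h

lemma compactSpace_of_isEmbedding_incl [TopologicalSpace S] [CompactSpace (Brandt I S)] {α : I}
    (hemb : IsEmbedding (brandtIncl (I := I) (S := S) α)) : CompactSpace S := by
  rw [← isCompact_univ_iff, hemb.isCompact_iff, Set.image_univ, ← range_unit_mul_mul_unit]
  exact isCompact_range (by fun_prop)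

lemma compactSpace_of_finite [TopologicalSpace S] [Finite I] [CompactSpace S] {α : I}
    (hcont : Continuous (brandtIncl (I := I) (S := S) α)) : CompactSpace (Brandt I S) := by
  rw [← isCompact_univ_iff, ← iUnion_unit_mul_range_incl_mul_unit α]
  exact isCompact_iUnion fun _ => (isCompact_range hcont).image (by fun_prop)

end Brandt

theorem brandt_compact_iff_general {I S : Type*} [MonoidWithZero S]
    [TopologicalSpace S]
    (h1 : (1 : S) ≠ 0)
    [TopologicalSpace (Brandt I S)] [ContinuousMul (Brandt I S)]
    [T2Space (Brandt I S)]
    (α : I) (hemb : Topology.IsEmbedding (brandtIncl (I := I) (S := S) α)) :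
    CompactSpace (Brandt I S) ↔ (Finite I ∧ CompactSpace S) := by
  have : Nontrivial S := nontrivial_of_ne 1 0 h1
  exact ⟨fun _ => ⟨Brandt.finite_of_compactSpace (S := S),
      Brandt.compactSpace_of_isEmbedding_incl hemb⟩,
    fun ⟨_, _⟩ => Brandt.compactSpace_of_finite hemb.continuous⟩

/-- A topological Brandt `λ⁰`-extension `B⁰_λ(S)` of a topological
monoid `(S,τ)` with zero is compact iff `λ` is finite and `(S,τ)` is compact. -/
theorem brandt_compact_iff {I S : Type*} [MonoidWithZero S]
    [TopologicalSpace S] [ContinuousMul S] [Nonempty I]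
    (h1 : (1 : S) ≠ 0)
    [TopologicalSpace (Brandt I S)] [ContinuousMul (Brandt I S)]
    [T2Space (Brandt I S)]
    (α : I) (hemb : Topology.IsEmbedding (brandtIncl (I := I) (S := S) α)) :
    CompactSpace (Brandt I S) ↔ (Finite I ∧ CompactSpace S) :=
  brandt_compact_iff_general h1 α hemb
end
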